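/- Let β ∈ (0,1) and let ν be an atomic β-biased probability measure on ℝ (centered at 0, finite first moment, S(ν) < ∞, ν({S(ν)}) ≥ β). If ν([0,∞)) > β, then ν is strongly β-biased, i.e., ν can be written as a mixture ν = ∫ ν_x ρ(dx) where each ν_x is simple γ(x)-biased for some γ(x) > β. -/

import Mathlib

open MeasureTheory ProbabilityTheory Set

noncomputable section

/-- Topological support of a measure on `ℝ`: points all of whose neighborhoods have
positive measure. -/
def msupp (ν : Measure ℝ) : Set ℝ := {x : ℝ | ∀ ε > 0, 0 < ν (Metric.ball x ε)}

/-- `S(ν)`, the supremum of the support. -/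
def Ssup (ν : Measure ℝ) : ℝ := sSup (msupp ν)

/-- `s(ν)`, the infimum of the support. -/
def sinf (ν : Measure ℝ) : ℝ := sInf (msupp ν)

/-- Barycenter of a finite measure. -/
def barOf (ν : Measure ℝ) : ℝ := (∫ y, y ∂ν) / (ν Set.univ).toReal

/-- A probability measure centered at `0` is simple `β`-biased if its restriction to
`[0,∞)` is a single atom of mass at least `β`. -/
def IsSimpleBiased (β : ℝ) (ν : Measure ℝ) : Prop :=
  IsProbabilityMeasure ν ∧ Integrable id ν ∧ (∫ y, y ∂ν) = 0 ∧
  ∃ M : ℝ, 0 ≤ M ∧ ν.restrict (Set.Ici 0) = ν {M} • Measure.dirac M ∧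
    ENNReal.ofReal β ≤ ν {M}

/-- A probability measure centered at `0` is atomic `β`-biased if its support is bounded
above and it has an atom of mass at least `β` at the maximum of its support. -/
def IsAtomicBiased (β : ℝ) (ν : Measure ℝ) : Prop :=
  IsProbabilityMeasure ν ∧ Integrable id ν ∧ (∫ y, y ∂ν) = 0 ∧
  BddAbove (msupp ν) ∧ ENNReal.ofReal β ≤ ν {Ssup ν}

/-- `ν` is a mixture of measures satisfying `P`. -/
def IsMixtureOf (ν : Measure ℝ) (P : Measure ℝ → Prop) : Prop :=
  ∃ ρ : Measure ℝ, IsProbabilityMeasure ρ ∧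
    ∃ κ : ProbabilityTheory.Kernel ℝ ℝ, IsMarkovKernel κ ∧
      (∀ x : ℝ, P (κ x)) ∧ ν = ρ.bind (fun x => κ x)

/-- `β`-biased probability measure (centered at `0`). -/
def IsBiased (β : ℝ) (ν : Measure ℝ) : Prop := IsMixtureOf ν (IsAtomicBiased β)

/-- `β`-biased around `x`. -/
def IsBiasedAround (β x : ℝ) (ν : Measure ℝ) : Prop :=
  IsBiased β (ν.map (fun y => y - x))

/-- Strongly `β`-biased probability measure (centered at `0`). -/
def IsStronglyBiased (β : ℝ) (ν : Measure ℝ) : Prop :=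
  ∃ ρ : Measure ℝ, IsProbabilityMeasure ρ ∧
    ∃ κ : ProbabilityTheory.Kernel ℝ ℝ, IsMarkovKernel κ ∧
      ∃ γ : ℝ → ℝ, (∀ x : ℝ, β < γ x ∧ IsSimpleBiased (γ x) (κ x)) ∧
        ν = ρ.bind (fun x => κ x)

/-- Strongly `β`-biased around `x`. -/
def IsStronglyBiasedAround (β x : ℝ) (ν : Measure ℝ) : Prop :=
  IsStronglyBiased β (ν.map (fun y => y - x))

/-- Convex order between finite measures on `ℝ`. -/
def ConvexOrder (μ ν : Measure ℝ) : Prop :=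
  ∀ φ : ℝ → ℝ, ConvexOn ℝ Set.univ φ → Integrable φ μ → Integrable φ ν →
    ∫ y, φ y ∂μ ≤ ∫ y, φ y ∂ν

/-- The distorted reflection `R^β`. -/
def Rbeta (β : ℝ) : ℝ → ℝ := fun x =>
  if 0 ≤ x then -(β / (1 - β)) * x else -((1 - β) / β) * x

/-- The transform `Z^β`. -/
def Zbeta (β : ℝ) (f : ℝ → ℝ) : ℝ → ℝ := fun x =>
  if 0 < x then ((1 - β) / β) * f ((β / (1 - β)) * x) else f x

/-- The `β`-biased order `μ ≼_β ν`: existence of a kernel `κ` with `ν = μ.bind κ` such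
that `κ x` is `β`-biased around `x` for `μ`-a.e. `x`. -/
def BiasedOrder (β : ℝ) (μ ν : Measure ℝ) : Prop :=
  ∃ κ : ProbabilityTheory.Kernel ℝ ℝ, IsMarkovKernel κ ∧
    (∀ᵐ x ∂μ, IsBiasedAround β x (κ x)) ∧ ν = μ.bind (fun x => κ x)

/-- The strong `β`-biased order `μ ≼_{sβ} ν`. -/
def StrongBiasedOrder (β : ℝ) (μ ν : Measure ℝ) : Prop :=
  ∃ κ : ProbabilityTheory.Kernel ℝ ℝ, IsMarkovKernel κ ∧
    (∀ᵐ x ∂μ, IsStronglyBiasedAround β x (κ x)) ∧ ν = μ.bind (fun x => κ x)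

/-- The 1-Wasserstein distance between probability measures on `ℝ`. -/
def W1 (μ ν : Measure ℝ) : ℝ :=
  sInf {c : ℝ | ∃ π : Measure (ℝ × ℝ), IsProbabilityMeasure π ∧
    π.map Prod.fst = μ ∧ π.map Prod.snd = ν ∧
    Integrable (fun p => |p.1 - p.2|) π ∧ c = ∫ p, |p.1 - p.2| ∂π}

/-- `η` is a regular conditional law of `X` given the sub-σ-algebra `m₀`. -/
def IsCondLaw {Ω : Type*} [mΩ : MeasurableSpace Ω] (m₀ : MeasurableSpace Ω)
    (P : Measure Ω) (X : Ω → ℝ) (η : Ω → Measure ℝ) : Prop :=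
  (∀ ω, IsProbabilityMeasure (η ω)) ∧
  ∀ B : Set ℝ, MeasurableSet B →
    (fun ω => (η ω B).toReal) =ᵐ[P] P[(X ⁻¹' B).indicator (fun _ => (1 : ℝ))|m₀]


/-!
Split `ν` at `0` into `ν₊ = ν|[0,∞)` and `ν₋ = ν|(-∞,0)` of mass `c`, let `η = ν₋ / c` and
`m = ∫ y dν₊`, so that `η` has mean `-a` with `a = m / c`. For `p ≥ 0` the measure
`a/(p+a) • δ_p + p/(p+a) • η` is centered and simple `a/(p+a)`-biased, and mixing these over `p`
against `ρ(dp) = (p+a)/a • ν₊(dp)` gives back `ν₊ + (m/a) • η = ν`. As `ν₊` lives on `[0, S(ν)]`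
every bias is at least `a/(S+a)`, which exceeds `β` because `β S ≤ ν{S} S ≤ m` and `c < 1 - β`.
If `ν₋ = 0`, centering forces `ν = δ₀`.
-/

open Measure
open scoped ENNReal

lemma ae_le_Ssup {ν : Measure ℝ} (hbdd : BddAbove (msupp ν)) : ∀ᵐ y ∂ν, y ≤ Ssup ν := by
  refine measure_null_of_locally_null _ fun x hx => ?_
  obtain ⟨ε, hε, hball⟩ : ∃ ε > 0, ν (Metric.ball x ε) = 0 := by
    have hx : x ∉ msupp ν := fun hmem => hx (le_csSup hbdd hmem)
    simpa [msupp] using hx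
  exact ⟨_, mem_nhdsWithin_of_mem_nhds (Metric.ball_mem_nhds x hε), hball⟩

lemma eq_dirac_zero_of_integral_eq_zero {ν : Measure ℝ} [IsProbabilityMeasure ν]
    (hint : Integrable id ν) (hbar : ∫ y, y ∂ν = 0) (hneg : ν (Iio 0) = 0) :
    ν = dirac 0 := by
  have hnonneg : 0 ≤ᵐ[ν] id := measure_mono_null (fun y hy => by simpa using hy) hneg
  have hzero : id =ᵐ[ν] fun _ => (0 : ℝ) :=
    (integral_eq_zero_iff_of_nonneg_ae hnonneg hint).mp hbar
  rw [← Measure.map_id (μ := ν), Measure.map_congr hzero, Measure.map_const, measure_univ,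
    one_smul]

lemma isStronglyBiased_dirac_zero {β : ℝ} (hβ : β < 1) : IsStronglyBiased β (dirac 0) := by
  have hsimple : IsSimpleBiased 1 (dirac (0 : ℝ)) := by
    classical
    refine ⟨inferInstance, integrable_dirac (by simp), by simp, 0, le_rfl, ?_, by simp⟩
    simp [restrict_dirac]
  refine ⟨dirac 0, inferInstance, Kernel.const ℝ (dirac 0), inferInstance, fun _ => 1,
    fun _ => ⟨hβ, hsimple⟩, ?_⟩
  rw [Measure.dirac_bind (Kernel.measurable _), Kernel.const_apply]

section BalancedMix

variable {η : Measure ℝ} {a p : ℝ}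

variable (η a) in
def balancedMix (p : ℝ) : Measure ℝ :=
  ENNReal.ofReal (a / (p + a)) • dirac p + ENNReal.ofReal (p / (p + a)) • η

lemma balancedMix_apply (p : ℝ) {B : Set ℝ} (hB : MeasurableSet B) :
    balancedMix η a p B =
      ENNReal.ofReal (a / (p + a)) * B.indicator 1 p + ENNReal.ofReal (p / (p + a)) * η B := by
  simp [balancedMix, dirac_apply' _ hB]

lemma measurable_balancedMix : Measurable (balancedMix η a) := by
  refine Measure.measurable_of_measurable_coe _ fun B hB => ?_
  simp_rw [balancedMix_apply _ hB]
  have : Measurable (B.indicator (1 : ℝ → ℝ≥0∞)) := measurable_one.indicator hB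
  fun_prop

lemma isProbabilityMeasure_balancedMix [IsProbabilityMeasure η] (ha : 0 < a) (hp : 0 ≤ p) :
    IsProbabilityMeasure (balancedMix η a p) := by
  constructor
  rw [balancedMix_apply _ MeasurableSet.univ, indicator_univ, Pi.one_apply, measure_univ,
    mul_one, mul_one, ← ENNReal.ofReal_add (by positivity) (by positivity), ← add_div,
    add_comm, div_self (by positivity), ENNReal.ofReal_one]

lemma integral_id_balancedMix (hint : Integrable id η) (hmean : ∫ y, y ∂η = -a) (ha : 0 < a)
    (hp : 0 ≤ p) : ∫ y, y ∂balancedMix η a p = 0 := by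
  have hdirac : Integrable id (dirac p) := integrable_dirac (by simp)
  rw [balancedMix, show (fun y : ℝ => y) = id from rfl,
    integral_add_measure (hdirac.smul_measure ENNReal.ofReal_ne_top)
      (hint.smul_measure ENNReal.ofReal_ne_top), integral_smul_measure, integral_smul_measure,
    integral_dirac, ENNReal.toReal_ofReal (by positivity), ENNReal.toReal_ofReal (by positivity)]
  simp only [id_eq, smul_eq_mul, hmean]
  field_simp
  ring

lemma isSimpleBiased_balancedMix [IsProbabilityMeasure η] (hint : Integrable id η)
    (hnonneg : η (Ici 0) = 0) (hmean : ∫ y, y ∂η = -a) (ha : 0 < a) (hp : 0 ≤ p) :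
    IsSimpleBiased (a / (p + a)) (balancedMix η a p) := by
  have hatom : balancedMix η a p {p} = ENNReal.ofReal (a / (p + a)) := by
    rw [balancedMix_apply _ (measurableSet_singleton p),
      measure_mono_null (singleton_subset_iff.mpr (mem_Ici.mpr hp)) hnonneg]
    simp
  refine ⟨isProbabilityMeasure_balancedMix ha hp, ?_, integral_id_balancedMix hint hmean ha hp,
    p, hp, ?_, hatom.ge⟩
  · exact ((integrable_dirac (by simp)).smul_measure ENNReal.ofReal_ne_top).add_measure
      (hint.smul_measure ENNReal.ofReal_ne_top)
  · classical
    rw [hatom, balancedMix, restrict_add, restrict_smul, restrict_smul,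
      restrict_eq_zero.mpr hnonneg, smul_zero, add_zero, restrict_dirac' measurableSet_Ici]
    simp [hp]

lemma withDensity_bind_balancedMix {μ : Measure ℝ} (hμ : ∀ᵐ p ∂μ, 0 ≤ p) (ha : 0 < a)
    {κ : Kernel ℝ ℝ} (hκ : ∀ᵐ p ∂μ, κ p = balancedMix η a p) :
    (μ.withDensity fun p => ENNReal.ofReal ((p + a) / a)).bind κ =
      μ + (∫⁻ p, ENNReal.ofReal (p / a) ∂μ) • η := by
  ext B hB
  rw [bind_apply hB κ.measurable.aemeasurable, lintegral_withDensity_eq_lintegral_mul _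
    (by fun_prop) (κ.measurable_coe hB)]
  have hpoint : ∀ᵐ p ∂μ, ((fun p => ENNReal.ofReal ((p + a) / a)) * fun p => κ p B) p =
      B.indicator 1 p + ENNReal.ofReal (p / a) * η B := by
    filter_upwards [hμ, hκ] with p hp hκp
    have hpa : p + a ≠ 0 := by positivity
    rw [Pi.mul_apply, hκp, balancedMix_apply _ hB, mul_add, ← mul_assoc, ← mul_assoc,
      ← ENNReal.ofReal_mul (by positivity), ← ENNReal.ofReal_mul (by positivity)]
    congr 3
    · field_simp; simp
    · field_simp
  rw [lintegral_congr_ae hpoint, lintegral_add_left (measurable_one.indicator hB),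
    lintegral_indicator_one hB, lintegral_mul_const _ (by fun_prop)]
  simp

-- Only the values on `[0, S]` matter; outside, the kernel is frozen at the nearest endpoint.
variable (η) in
def balancedMixKernel (a : ℝ) {S : ℝ} (hS : 0 ≤ S) : Kernel ℝ ℝ where
  toFun x := balancedMix η a (projIcc 0 S hS x)
  measurable' :=
    measurable_balancedMix.comp (continuous_subtype_val.comp continuous_projIcc).measurable

lemma isMarkovKernel_balancedMixKernel [IsProbabilityMeasure η] (ha : 0 < a) {S : ℝ}
    (hS : 0 ≤ S) : IsMarkovKernel (balancedMixKernel η a hS) :=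
  ⟨fun x => isProbabilityMeasure_balancedMix ha (projIcc 0 S hS x).2.1⟩

end BalancedMix

lemma isStronglyBiased_of_bind_eq {β : ℝ} {ν ρ : Measure ℝ} [IsProbabilityMeasure ν]
    {κ : Kernel ℝ ℝ} [IsMarkovKernel κ] {γ : ℝ → ℝ} (hγ : ∀ x, β < γ x)
    (hκ : ∀ x, IsSimpleBiased (γ x) (κ x)) (hbind : ρ.bind κ = ν) : IsStronglyBiased β ν := by
  have hρ : IsProbabilityMeasure ρ := ⟨by
    simpa [← hbind, bind_apply MeasurableSet.univ κ.measurable.aemeasurable] using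
      measure_univ (μ := ν)⟩
  exact ⟨ρ, hρ, κ, inferInstance, γ, fun x => ⟨hγ x, hκ x⟩, hbind.symm⟩

lemma setIntegral_Iio_zero_neg {ν : Measure ℝ} (hint : Integrable id ν) (hneg : ν (Iio 0) ≠ 0) :
    ∫ y in Iio 0, y ∂ν < 0 := by
  have hpos : 0 < ∫ y in Iio 0, -y ∂ν := by
    rw [setIntegral_pos_iff_support_of_nonneg_ae (f := fun y => -y) _ hint.neg.integrableOn]
    · rwa [inter_eq_right.mpr fun y hy => by simpa using hy.ne, pos_iff_ne_zero]
    · filter_upwards [ae_restrict_mem measurableSet_Iio] with y hy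
      simpa using hy.le
  rw [integral_neg] at hpos
  linarith

lemma setIntegral_Iio_zero_add_setIntegral_Ici_zero {ν : Measure ℝ} (hint : Integrable id ν) :
    ∫ y in Iio 0, y ∂ν + ∫ y in Ici 0, y ∂ν = ∫ y, y ∂ν := by
  rw [← compl_Iio, integral_add_compl (f := fun y => y) measurableSet_Iio hint]

lemma measureReal_mul_le_setIntegral_Ici_zero {ν : Measure ℝ} (hint : Integrable id ν) {S : ℝ}
    (hS : 0 ≤ S) : ν.real {S} * S ≤ ∫ y in Ici 0, y ∂ν := by
  calc ν.real {S} * S = ∫ y in {S}, y ∂ν := by rw [integral_singleton, smul_eq_mul]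
    _ ≤ ∫ y in Ici 0, y ∂ν := setIntegral_mono_set hint.integrableOn
        (ae_restrict_of_forall_mem measurableSet_Ici fun _ hy => hy)
        (singleton_subset_iff.mpr hS).eventuallyLE

lemma integral_cond_Iio_zero {ν : Measure ℝ} [IsFiniteMeasure ν] (hint : Integrable id ν)
    (hbar : ∫ y, y ∂ν = 0) (hneg : ν (Iio 0) ≠ 0) {a : ℝ}
    (hmean : ∫ y in Ici 0, y ∂ν = a * ν.real (Iio 0)) :
    ∫ y, y ∂ν[|Iio 0] = -a := by
  have hIio := setIntegral_Iio_zero_add_setIntegral_Ici_zero hint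
  have hc : ν.real (Iio 0) ≠ 0 := ENNReal.toReal_ne_zero.mpr ⟨hneg, measure_ne_top _ _⟩
  rw [ProbabilityTheory.cond, integral_smul_measure, ENNReal.toReal_inv, ← measureReal_def,
    smul_eq_mul]
  field_simp
  linarith

lemma bind_balancedMixKernel_eq {ν : Measure ℝ} [IsFiniteMeasure ν] (hint : Integrable id ν)
    (hneg : ν (Iio 0) ≠ 0) {S : ℝ} (hS0 : 0 ≤ S) (hS : ∀ᵐ y ∂ν, y ≤ S) {a : ℝ} (ha : 0 < a)
    (hmean : ∫ y in Ici 0, y ∂ν = a * ν.real (Iio 0)) :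
    ((ν.restrict (Ici 0)).withDensity fun p => ENNReal.ofReal ((p + a) / a)).bind
      (balancedMixKernel ν[|Iio 0] a hS0) = ν := by
  have hnonneg : ∀ᵐ p ∂ν.restrict (Ici 0), 0 ≤ p :=
    ae_restrict_of_forall_mem measurableSet_Ici fun _ hp => hp
  have hweight : ∫⁻ p, ENNReal.ofReal (p / a) ∂ν.restrict (Ici 0) = ν (Iio 0) := by
    rw [← ofReal_integral_eq_lintegral_ofReal (f := fun p => p / a) (hint.restrict.div_const a)
      (hnonneg.mono fun p hp => div_nonneg hp ha.le), integral_div, hmean,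
      mul_div_cancel_left₀ _ ha.ne', measureReal_def, ENNReal.ofReal_toReal (measure_ne_top _ _)]
  rw [withDensity_bind_balancedMix (η := ν[|Iio 0]) hnonneg ha ?_, hweight,
    ProbabilityTheory.cond, smul_smul, ENNReal.mul_inv_cancel hneg (measure_ne_top _ _), one_smul,
    ← compl_Ici, restrict_add_restrict_compl measurableSet_Ici]
  filter_upwards [ae_restrict_mem measurableSet_Ici, ae_restrict_of_ae hS] with p hp hpS
  simp [balancedMixKernel, projIcc_of_mem _ ⟨hp, hpS⟩]

lemma lt_div_add_self {β a p S : ℝ} (hβ : 0 ≤ β) (ha : 0 < a) (hS : β * S < a * (1 - β))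
    (hp : p ∈ Icc 0 S) : β < a / (p + a) := by
  rw [lt_div_iff₀ (by linarith [hp.1])]
  nlinarith [mul_le_mul_of_nonneg_left hp.2 hβ]

lemma isStronglyBiased_of_measure_Iio_ne_zero {β S : ℝ} (hβ : 0 < β) {ν : Measure ℝ}
    [IsProbabilityMeasure ν] (hint : Integrable id ν) (hbar : ∫ y, y ∂ν = 0)
    (hS : ∀ᵐ y ∂ν, y ≤ S) (hatom : ENNReal.ofReal β ≤ ν {S})
    (hmass : ENNReal.ofReal β < ν (Ici 0)) (hneg : ν (Iio 0) ≠ 0) : IsStronglyBiased β ν := by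
  have hS0 : 0 ≤ S := by
    by_contra! hSneg
    have hpos : ν (Ici 0) = 0 := measure_eq_zero_iff_ae_notMem.mpr <|
      hS.mono fun y hy => not_le.mpr (hy.trans_lt hSneg)
    simp [hpos] at hmass
  set m := ∫ y in Ici 0, y ∂ν
  set c := ν.real (Iio 0)
  have hm : 0 < m := by
    linarith [setIntegral_Iio_zero_neg hint hneg,
      setIntegral_Iio_zero_add_setIntegral_Ici_zero hint]
  have hc : 0 < c := ENNReal.toReal_pos hneg (measure_ne_top _ _)
  have hc1 : c < 1 - β := by
    have hβ' : β < ν.real (Ici 0) :=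
      (ENNReal.ofReal_lt_iff_lt_toReal hβ.le (measure_ne_top _ _)).mp hmass
    have hcompl : c = 1 - ν.real (Ici 0) := by
      rw [← probReal_compl_eq_one_sub measurableSet_Ici, compl_Ici]
    linarith
  have hmS : β * S ≤ m :=
    (mul_le_mul_of_nonneg_right
      ((ENNReal.ofReal_le_iff_le_toReal (measure_ne_top _ _)).mp hatom) hS0).trans
      (measureReal_mul_le_setIntegral_Ici_zero hint hS0)
  set a := m / c
  have ha : 0 < a := div_pos hm hc
  have hmean : m = a * c := (div_mul_cancel₀ m hc.ne').symm
  have hSa : β * S < a * (1 - β) := by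
    rw [div_mul_eq_mul_div, lt_div_iff₀ hc]
    nlinarith
  have hηint : Integrable id ν[|Iio 0] :=
    hint.restrict.smul_measure (ENNReal.inv_ne_top.mpr hneg)
  have hηpos : ν[|Iio 0] (Ici 0) = 0 := by simp [cond_apply measurableSet_Iio, Iio_inter_Ici]
  have := cond_isProbabilityMeasure (μ := ν) hneg
  have := isMarkovKernel_balancedMixKernel (η := ν[|Iio 0]) ha hS0
  exact isStronglyBiased_of_bind_eq
    (fun x => lt_div_add_self hβ.le ha hSa (projIcc 0 S hS0 x).2)
    (fun x => isSimpleBiased_balancedMix hηint hηpos (integral_cond_Iio_zero hint hbar hneg hmean)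
      ha (projIcc 0 S hS0 x).2.1)
    (bind_balancedMixKernel_eq hint hneg hS0 hS ha hmean)

/-- an atomic `β`-biased probability with `ν([0,∞)) > β` is strongly
`β`-biased. -/
theorem stmt9 (β : ℝ) (hβ : β ∈ Set.Ioo (0 : ℝ) 1) (ν : Measure ℝ)
    (h : IsAtomicBiased β ν) (hmass : ENNReal.ofReal β < ν (Set.Ici 0)) :
    IsStronglyBiased β ν := by
  obtain ⟨hprob, hint, hbar, hbdd, hatom⟩ := h
  by_cases hneg : ν (Iio 0) = 0
  · rw [eq_dirac_zero_of_integral_eq_zero hint hbar hneg]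
    exact isStronglyBiased_dirac_zero hβ.2
  · exact isStronglyBiased_of_measure_Iio_ne_zero hβ.1 hint hbar (ae_le_Ssup hbdd) hatom hmass hneg

end
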